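/- arXiv:1405.4251 — 3 statements merged into one kernel-verified Lean document; each statement's English description precedes it below -/
import Mathlib

section
/- For random vectors $\hat{\delta} \in \mathbb{R}^p$ (unadjusted estimates) and fixed effect sizes $\delta \in \mathbb{R}^p$, with $\hat{\delta}_{(k)}$ the $k$-th order statistic, $j(k)$ its (random) index, bias $\beta_k = E[\hat{\delta}_{(k)} - \delta_{j(k)}]$, and oracle estimates $\bar{\delta}_{j(k)} = \hat{\delta}_{(k)} - \beta_k$, the following decomposition holds: $\sum_{k=1}^p E[(\hat{\delta}_k - \delta_k)^2] = \sum_{k=1}^p \beta_k^2 + \sum_{k=1}^p E[(\bar{\delta}_k - \delta_k)^2]$. -/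
open MeasureTheory ProbabilityTheory Filter Real

noncomputable section

/-- The `k`-th order statistic of a vector `v`. -/
def orderStat {n : ℕ} (v : Fin n → ℝ) (k : Fin n) : ℝ := v (Tuple.sort v k)

/-- The (random) index of the `k`-th order statistic of `v`. -/
def ordIdx {n : ℕ} (v : Fin n → ℝ) (k : Fin n) : Fin n := Tuple.sort v k

/-!
Since `k ↦ j(k)` is a permutation, the total squared error of the unadjusted estimates is the
total squared error `∑ₖ E[(δ̂₍ₖ₎ - δ_{j(k)})²]` of the order statistics. For each `k`, the
bias–variance decomposition `E[Y²] = (E Y)² + E[(Y - E Y)²]` applied to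
`Y = δ̂₍ₖ₎ - δ_{j(k)}` splits that term into `βₖ²` plus the squared error of the oracle estimate.
-/

lemma sum_comp_ordIdx {n : ℕ} {M : Type*} [AddCommMonoid M] (v : Fin n → ℝ) (f : Fin n → M) :
    ∑ k, f (ordIdx v k) = ∑ i, f i :=
  Equiv.sum_comp (Tuple.sort v) f

lemma integral_sq_eq_sq_integral_add_integral_sq_sub {Ω : Type*} [MeasurableSpace Ω]
    {μ : Measure Ω} [IsProbabilityMeasure μ] {Y : Ω → ℝ} (hY : MemLp Y 2 μ) :
    ∫ ω, Y ω ^ 2 ∂μ = (∫ ω, Y ω ∂μ) ^ 2 + ∫ ω, (Y ω - ∫ ω', Y ω' ∂μ) ^ 2 ∂μ := by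
  have h := variance_eq_sub hY
  rw [variance_eq_integral hY.aemeasurable] at h
  simp only [Pi.pow_apply] at h
  linarith

theorem stmt0_general {p : ℕ} {Ω : Type*} [MeasurableSpace Ω] (P : Measure Ω) [IsProbabilityMeasure P]
    (X : Ω → Fin p → ℝ) (δ : Fin p → ℝ)
    (hint1 : ∀ j, Integrable (fun ω => (X ω j - δ j) ^ 2) P)
    (hint2 : ∀ k, Integrable (fun ω => orderStat (X ω) k - δ (ordIdx (X ω) k)) P)
    (hint3 : ∀ k, Integrable (fun ω => (orderStat (X ω) k - δ (ordIdx (X ω) k)) ^ 2) P)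
    (β : Fin p → ℝ)
    (hβ : ∀ k, β k = ∫ ω, (orderStat (X ω) k - δ (ordIdx (X ω) k)) ∂P) :
    ∑ k, ∫ ω, (X ω k - δ k) ^ 2 ∂P =
      ∑ k, (β k) ^ 2 +
        ∑ k, ∫ ω, ((orderStat (X ω) k - β k) - δ (ordIdx (X ω) k)) ^ 2 ∂P := by
  set Y : Fin p → Ω → ℝ := fun k ω => orderStat (X ω) k - δ (ordIdx (X ω) k)
  have hY : ∀ k, MemLp (Y k) 2 P := fun k =>
    (memLp_two_iff_integrable_sq (hint2 k).aestronglyMeasurable).2 (hint3 k)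
  calc ∑ k, ∫ ω, (X ω k - δ k) ^ 2 ∂P
      = ∫ ω, ∑ k, (X ω k - δ k) ^ 2 ∂P := (integral_finsetSum _ fun k _ => hint1 k).symm
    _ = ∫ ω, ∑ k, Y k ω ^ 2 ∂P := by
        congr 1 with ω
        exact (sum_comp_ordIdx (X ω) fun i => (X ω i - δ i) ^ 2).symm
    _ = ∑ k, ∫ ω, Y k ω ^ 2 ∂P := integral_finsetSum _ fun k _ => hint3 k
    _ = ∑ k, ((β k) ^ 2 + ∫ ω, (Y k ω - β k) ^ 2 ∂P) := Finset.sum_congr rfl fun k _ => by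
        rw [hβ k]
        exact integral_sq_eq_sq_integral_add_integral_sq_sub (hY k)
    _ = _ := by
        simp only [Finset.sum_add_distrib, Y, sub_right_comm]

/-- MSE decomposition: the sum of squared errors of the unadjusted estimates equals the sum of
squared frequentist selection biases plus the MSE of the oracle estimates. -/
theorem stmt0 {p : ℕ} {Ω : Type*} [MeasurableSpace Ω] (P : Measure Ω) [IsProbabilityMeasure P]
    (X : Ω → Fin p → ℝ) (δ : Fin p → ℝ)
    (hdist : ∀ᵐ ω ∂P, Function.Injective (X ω))
    (hint1 : ∀ j, Integrable (fun ω => (X ω j - δ j) ^ 2) P)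
    (hint2 : ∀ k, Integrable (fun ω => orderStat (X ω) k - δ (ordIdx (X ω) k)) P)
    (hint3 : ∀ k, Integrable (fun ω => (orderStat (X ω) k - δ (ordIdx (X ω) k)) ^ 2) P)
    (β : Fin p → ℝ)
    (hβ : ∀ k, β k = ∫ ω, (orderStat (X ω) k - δ (ordIdx (X ω) k)) ∂P) :
    ∑ k, ∫ ω, (X ω k - δ k) ^ 2 ∂P =
      ∑ k, (β k) ^ 2 +
        ∑ k, ∫ ω, ((orderStat (X ω) k - β k) - δ (ordIdx (X ω) k)) ^ 2 ∂P :=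
  stmt0_general P X δ hint1 hint2 hint3 β hβ
end
end

section
/- Let $R$ be the $p\times p$ equicorrelation matrix with off-diagonal entries $\rho$, $-1/(p-1) < \rho < 1$, and diagonal entries $1$. For any fixed $\delta \in \mathbb{R}^p$, the frequentist selection bias of the $k$-th order statistic under $\hat{\delta}^R \sim N(\delta, R)$ equals the frequentist selection bias of the $k$-th order statistic under $\hat{\delta}^{(1-\rho)I} \sim N(\delta, (1-\rho)I)$, i.e., $\beta(\delta, R)_k = \beta(\delta, (1-\rho)I)_k$ for all $k = 1, \ldots, p$. -/
open MeasureTheory ProbabilityTheory Filter Real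

noncomputable section

/-- Product of i.i.d. standard Gaussians on `Fin n → ℝ`. -/
def stdGaussianPi (n : ℕ) : Measure (Fin n → ℝ) := Measure.pi fun _ => gaussianReal 0 1

/-- `μ` is a multivariate Gaussian with mean `δ` and covariance `S`. -/
def IsMvGaussian {n : ℕ} (μ : Measure (Fin n → ℝ)) (δ : Fin n → ℝ)
    (S : Matrix (Fin n) (Fin n) ℝ) : Prop :=
  ∃ L : Matrix (Fin n) (Fin n) ℝ, L * L.transpose = S ∧
    μ = (stdGaussianPi n).map (fun z j => δ j + ∑ i, L j i * z i)

/-- Frequentist selection bias of the `k`-th order statistic under distribution `μ`. -/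
def biasM {n : ℕ} (μ : Measure (Fin n → ℝ)) (δ : Fin n → ℝ) (k : Fin n) : ℝ :=
  ∫ v, (orderStat v k - δ (ordIdx v k)) ∂μ

/-- The equicorrelation matrix: unit diagonal, off-diagonal entries `ρ`. -/
def equicor (n : ℕ) (ρ : ℝ) : Matrix (Fin n) (Fin n) ℝ := fun i j => if i = j then 1 else ρ

/-!
A Gaussian law is determined by its mean and covariance, and `equicor n ρ = L * Lᵀ` for
`L = b • 1 + c • J` (`J` the all-ones matrix) as soon as `b ^ 2 = 1 - ρ` and `2bc + nc² = ρ`,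
which is solvable when `1 - ρ ≥ 0` and `1 + (n - 1)ρ ≥ 0`. Hence `N(δ, R)` is the law of
`δ + b z + (c ∑ᵢ zᵢ) 𝟙` and `N(δ, (1 - ρ) I)` that of `δ + b z`, for `z` standard Gaussian.
Shifting all coordinates by a common amount `t` leaves the ranking unchanged and adds `t` to the
selection error; the shift `c ∑ᵢ zᵢ` is not independent of `z`, but it has mean zero, so by
linearity both biases coincide.
-/

open WithLp Matrix

lemma Tuple.sort_comp_strictMono {α β : Type*} [LinearOrder α] [LinearOrder β] {n : ℕ}
    {g : α → β} (hg : StrictMono g) (f : Fin n → α) : Tuple.sort (g ∘ f) = Tuple.sort f := by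
  obtain ⟨-, hties⟩ := Tuple.eq_sort_iff.1 (rfl : Tuple.sort f = Tuple.sort f)
  refine (Tuple.eq_sort_iff.2 ⟨hg.monotone.comp (Tuple.monotone_sort f), ?_⟩).symm
  exact fun i j hij h => hties i j hij (hg.injective h)

section OrderStatistics
variable {n : ℕ}

lemma ordIdx_add_const (v : Fin n → ℝ) (c : ℝ) (k : Fin n) :
    ordIdx (fun j => v j + c) k = ordIdx v k := by
  rw [ordIdx, ordIdx, ← Tuple.sort_comp_strictMono (strictMono_id.add_const c) v]
  rfl

lemma orderStat_add_const (v : Fin n → ℝ) (c : ℝ) (k : Fin n) :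
    orderStat (fun j => v j + c) k = orderStat v k + c := by
  rw [orderStat, orderStat, ← ordIdx, ← ordIdx, ordIdx_add_const]

lemma measurableSet_setOf_sort_eq (σ : Equiv.Perm (Fin n)) :
    MeasurableSet {v : Fin n → ℝ | Tuple.sort v = σ} := by
  simp_rw [eq_comm (a := Tuple.sort _), Tuple.eq_sort_iff, Monotone, Function.comp_apply]
  apply Measurable.setOf
  fun_prop

lemma measurable_orderStat_sub_apply_ordIdx (δ : Fin n → ℝ) (k : Fin n) :
    Measurable fun v : Fin n → ℝ => orderStat v k - δ (ordIdx v k) := by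
  have : (fun v : Fin n → ℝ => orderStat v k - δ (ordIdx v k)) = fun v =>
      ∑ σ : Equiv.Perm (Fin n), {v | Tuple.sort v = σ}.indicator (fun v => v (σ k) - δ (σ k)) v := by
    ext v
    rw [Finset.sum_eq_single_of_mem (Tuple.sort v) (Finset.mem_univ _)]
    · simp [orderStat, ordIdx]
    · intro σ _ hσ
      simp [Ne.symm hσ]
  rw [this]
  exact Finset.measurable_sum _ fun σ _ =>
    ((measurable_pi_apply _).sub_const _).indicator (measurableSet_setOf_sort_eq σ)

lemma abs_orderStat_sub_apply_ordIdx_le (δ v : Fin n → ℝ) (k : Fin n) :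
    |orderStat v k - δ (ordIdx v k)| ≤ ∑ i, |v i - δ i| :=
  Finset.single_le_sum (f := fun i => |v i - δ i|) (fun _ _ => abs_nonneg _) (Finset.mem_univ _)

lemma biasM_map_add_const {Ω : Type*} [MeasurableSpace Ω] {P : Measure Ω}
    [IsFiniteMeasure P] {X : Ω → Fin n → ℝ} {T : Ω → ℝ}
    (hX : ∀ i, Integrable (fun ω => X ω i) P) (hT : Integrable T P) (hT0 : ∫ ω, T ω ∂P = 0)
    (δ : Fin n → ℝ) (k : Fin n) :
    biasM (P.map fun ω j => X ω j + T ω) δ k = biasM (P.map X) δ k := by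
  have hXm : AEMeasurable X P := aemeasurable_pi_lambda _ fun i => (hX i).aemeasurable
  have hXTm : AEMeasurable (fun ω j => X ω j + T ω) P :=
    aemeasurable_pi_lambda _ fun i => ((hX i).add hT).aemeasurable
  have hf := measurable_orderStat_sub_apply_ordIdx δ k
  have hint : Integrable (fun ω => orderStat (X ω) k - δ (ordIdx (X ω) k)) P :=
    .mono' (integrable_finsetSum _ fun i _ => ((hX i).sub (integrable_const (δ i))).abs)
      (hf.comp_aemeasurable hXm).aestronglyMeasurable
      (ae_of_all _ fun ω => abs_orderStat_sub_apply_ordIdx_le δ (X ω) k)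
  rw [biasM, biasM, integral_map hXTm hf.aestronglyMeasurable,
    integral_map hXm hf.aestronglyMeasurable]
  simp_rw [orderStat_add_const, ordIdx_add_const, add_sub_right_comm _ (T _)]
  rw [integral_add hint hT, hT0, add_zero]

end OrderStatistics

section Gaussian

lemma map_stdGaussian_affine {ι : Type*} [Fintype ι] [DecidableEq ι] (m : EuclideanSpace ℝ ι)
    (L : Matrix ι ι ℝ) :
    (stdGaussian (EuclideanSpace ℝ ι)).map (fun x ↦ m + toEuclideanCLM (𝕜 := ℝ) L x) =
      multivariateGaussian m (L * Lᵀ) := by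
  rw [show (fun x ↦ m + toEuclideanCLM (𝕜 := ℝ) L x) =
      (fun x ↦ m + x) ∘ toEuclideanCLM (𝕜 := ℝ) L from rfl,
    ← Measure.map_map (measurable_const_add m) (by fun_prop)]
  apply IsGaussian.ext
  · rw [integral_id_multivariateGaussian', integral_map (by fun_prop) (by fun_prop)]
    simp only [id_eq]
    rw [integral_add (integrable_const m) IsGaussian.integrable_fun_id,
      ContinuousLinearMap.integral_id_map IsGaussian.integrable_id]
    simp
  · ext x y
    rw [covarianceBilin_map_const_add, covarianceBilin_map IsGaussian.memLp_two_id,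
      covarianceBilin_stdGaussian, ← conjTranspose_eq_transpose_of_trivial,
      covarianceBilin_multivariateGaussian (posSemidef_self_mul_conjTranspose L),
      innerSL_apply_apply, ContinuousLinearMap.adjoint_inner_left,
      ← ContinuousLinearMap.comp_apply, ← ContinuousLinearMap.mul_def,
      ← ContinuousLinearMap.star_eq_adjoint, ← map_star, ← map_mul, inner_toEuclideanCLM,
      star_eq_conjTranspose]

variable {n : ℕ}

lemma stdGaussianPi_eq_map_ofLp :
    stdGaussianPi n = (stdGaussian (EuclideanSpace ℝ (Fin n))).map ofLp := by
  rw [← map_pi_eq_stdGaussian, Measure.map_map (by fun_prop) (by fun_prop)]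
  exact Measure.map_id.symm

lemma IsMvGaussian.eq_map_multivariateGaussian {μ : Measure (Fin n → ℝ)} {δ : Fin n → ℝ}
    {S : Matrix (Fin n) (Fin n) ℝ} (h : IsMvGaussian μ δ S) :
    μ = (multivariateGaussian (toLp 2 δ) S).map ofLp := by
  obtain ⟨L, rfl, rfl⟩ := h
  rw [← map_stdGaussian_affine, Measure.map_map (by fun_prop) (by fun_prop),
    stdGaussianPi_eq_map_ofLp, Measure.map_map (by fun_prop) (by fun_prop)]
  rfl

lemma IsMvGaussian.unique {μ ν : Measure (Fin n → ℝ)} {δ : Fin n → ℝ}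
    {S : Matrix (Fin n) (Fin n) ℝ} (hμ : IsMvGaussian μ δ S) (hν : IsMvGaussian ν δ S) :
    μ = ν :=
  hμ.eq_map_multivariateGaussian.trans hν.eq_map_multivariateGaussian.symm

instance : IsProbabilityMeasure (stdGaussianPi n) := by
  unfold stdGaussianPi; infer_instance

lemma integrable_stdGaussianPi_apply (i : Fin n) :
    Integrable (fun z => z i) (stdGaussianPi n) :=
  integrable_eval IsGaussian.integrable_id

lemma integral_stdGaussianPi_apply (i : Fin n) : ∫ z, z i ∂stdGaussianPi n = 0 := by
  rw [stdGaussianPi, integral_eval, integral_id_gaussianReal]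

end Gaussian

section Equicorrelation
variable {n : ℕ}

lemma exists_equicor_sqrt_coeffs {ρ : ℝ} (hn : 0 < n) (h1 : ρ ≤ 1)
    (h2 : 0 ≤ 1 + (n - 1) * ρ) : ∃ b c : ℝ, b ^ 2 = 1 - ρ ∧ 2 * b * c + n * c ^ 2 = ρ := by
  have hb := Real.sq_sqrt (sub_nonneg.2 h1)
  have hs := Real.sq_sqrt h2
  generalize √(1 - ρ) = b at hb
  generalize √(1 + (n - 1) * ρ) = s at hs
  refine ⟨b, (s - b) / n, hb, ?_⟩
  have hn' : (n : ℝ) ≠ 0 := by positivity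
  field_simp
  linear_combination hs - hb

lemma isMvGaussian_equicor {ρ b c : ℝ} (hb : b ^ 2 = 1 - ρ) (hc : 2 * b * c + n * c ^ 2 = ρ)
    (δ : Fin n → ℝ) :
    IsMvGaussian ((stdGaussianPi n).map fun z j => (δ j + b * z j) + c * ∑ i, z i) δ
      (equicor n ρ) := by
  refine ⟨b • 1 + Matrix.of fun _ _ => c, ?_, ?_⟩
  · ext i j
    simp only [transpose_add, transpose_smul, transpose_one, Matrix.mul_apply, Matrix.add_apply,
      Matrix.smul_apply, Matrix.one_apply, smul_eq_mul, mul_ite, mul_one, mul_zero, of_apply,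
      transpose_apply, mul_add, add_mul, ite_mul, zero_mul, Finset.sum_add_distrib,
      Finset.sum_ite_eq', Finset.mem_univ, ↓reduceIte, Finset.sum_ite_eq, Finset.sum_const,
      Finset.card_univ, Fintype.card_fin, nsmul_eq_mul, equicor]
    split_ifs
    · linear_combination hb + hc
    · linear_combination hc
  · congr with z j
    simp [Matrix.one_apply, add_mul, Finset.sum_add_distrib, Finset.mul_sum, add_assoc]

lemma isMvGaussian_smul_one (b : ℝ) (δ : Fin n → ℝ) :
    IsMvGaussian ((stdGaussianPi n).map fun z j => δ j + b * z j) δ (b ^ 2 • 1) := by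
  refine ⟨b • 1, ?_, ?_⟩
  · simp [sq, smul_smul]
  · congr with z j
    simp [Matrix.one_apply]

end Equicorrelation

/-- Equicorrelated Gaussian estimates have the same selection biases as independent Gaussian
estimates with variance `1 - ρ`. -/
theorem stmt1 {p : ℕ} (hp : 2 ≤ p) (ρ : ℝ)
    (hρ1 : -(1 / ((p : ℝ) - 1)) < ρ) (hρ2 : ρ < 1) (δ : Fin p → ℝ)
    (μ ν : Measure (Fin p → ℝ))
    (hμ : IsMvGaussian μ δ (equicor p ρ))
    (hν : IsMvGaussian ν δ ((1 - ρ) • (1 : Matrix (Fin p) (Fin p) ℝ))) :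
    ∀ k, biasM μ δ k = biasM ν δ k := by
  intro k
  have hp1 : (0 : ℝ) < p - 1 := by
    rw [sub_pos]
    exact_mod_cast hp
  have hequi : 0 ≤ 1 + ((p : ℝ) - 1) * ρ := by
    have := mul_lt_mul_of_pos_left hρ1 hp1
    rw [mul_neg, mul_one_div_cancel hp1.ne'] at this
    linarith
  obtain ⟨b, c, hb, hc⟩ := exists_equicor_sqrt_coeffs (by omega) hρ2.le hequi
  rw [hμ.unique (isMvGaussian_equicor hb hc δ), hν.unique (hb ▸ isMvGaussian_smul_one b δ)]
  refine biasM_map_add_const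
    (fun i => (integrable_const _).add ((integrable_stdGaussianPi_apply i).const_mul b))
    ((integrable_finsetSum _ fun i _ => integrable_stdGaussianPi_apply i).const_mul c) ?_ δ k
  rw [integral_const_mul, integral_finsetSum _ fun i _ => integrable_stdGaussianPi_apply i]
  simp [integral_stdGaussianPi_apply]
end
end

section
/- Under the setup of equicorrelated Gaussian unadjusted estimates $\hat{\delta}^R \sim N(\delta, R)$ with $\delta = a\mathbf{1}$ and equicorrelation $\rho$, the MSE of the oracle estimator satisfies $\sum_{k=1}^p E[(\bar{\delta}_k - \delta_k)^2] = \sum_{k=1}^p E[(\hat{\delta}^R_k - \delta_k)^2] - (1-\rho)\sum_{k=1}^p \beta(\delta, I)_k^2$; in particular the oracle MSE is a nondecreasing affine function of $\rho$ (since $\sum_k E[(\hat{\delta}^R_k - \delta_k)^2] = p$ does not depend on $\rho$). -/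
open MeasureTheory ProbabilityTheory Filter Real

noncomputable section

/-!
The decomposition is distribution-free: the sorted vector is a permutation of the coordinates, so
the squared errors of the order statistics add up to those of the coordinates, and centring each
order statistic at its mean lowers its second moment by exactly the squared selection bias.

For the bias, an equicorrelated Gaussian vector has the law of `a + √(1-ρ) w + c (∑ᵢ wᵢ) 𝟙` with
`w` standard Gaussian: the matrix `√(1-ρ) • 1 + c • 𝟙𝟙ᵀ` squares to `equicor p ρ`, and a Gaussian
law is determined by its mean and covariance. Sorting commutes with the common shift
`c ∑ᵢ wᵢ`, whose mean is zero, so the bias is `√(1-ρ)` times the bias in the independent case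
`ρ = 0`.
-/

open WithLp Matrix

section OrderStatistics

variable {n : ℕ}

lemma orderStat_comp_of_monotone {g : ℝ → ℝ} (hg : Monotone g) (v : Fin n → ℝ) (k : Fin n) :
    orderStat (g ∘ v) k = g (orderStat v k) :=
  (congrFun ((Tuple.comp_sort_eq_comp_iff_monotone (f := g ∘ v)).2
    (hg.comp (Tuple.monotone_sort v))) k).symm

lemma sum_comp_orderStat (f : ℝ → ℝ) (v : Fin n → ℝ) :
    ∑ k, f (orderStat v k) = ∑ k, f (v k) :=
  Equiv.sum_comp (Tuple.sort v) (f ∘ v)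

lemma norm_orderStat_le (v : Fin n → ℝ) (k : Fin n) : ‖orderStat v k‖ ≤ ‖v‖ :=
  norm_le_pi_norm v _

/-- On the closed set where `v ∘ σ` is monotone, `σ` sorts `v`; these finitely many closed sets
cover the space, so the order statistic is continuous. -/
@[fun_prop]
lemma continuous_orderStat (k : Fin n) : Continuous fun v : Fin n → ℝ => orderStat v k := by
  let sorts (σ : Equiv.Perm (Fin n)) : Set (Fin n → ℝ) := {v | Monotone (v ∘ σ)}
  refine (locallyFinite_of_finite sorts).continuous ?_ (fun σ => ?_) (fun σ => ?_)
  · exact Set.eq_univ_of_forall fun v => Set.mem_iUnion.2 ⟨_, Tuple.monotone_sort v⟩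
  · simp only [sorts, Monotone, Set.ofPred_forall]
    exact isClosed_iInter fun i => isClosed_iInter fun j => isClosed_iInter fun _ =>
      isClosed_le (continuous_apply _) (continuous_apply _)
  · refine (continuous_apply (σ k)).continuousOn.congr fun v hv => ?_
    exact congrFun (Tuple.comp_sort_eq_comp_iff_monotone.2 hv).symm k

lemma memLp_orderStat {μ : Measure (Fin n → ℝ)} {p : ENNReal} (hμ : MemLp id p μ) (k : Fin n) :
    MemLp (fun v => orderStat v k) p μ :=
  hμ.of_le (continuous_orderStat k).aestronglyMeasurable
    (Eventually.of_forall fun v => norm_orderStat_le v k)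

end OrderStatistics

lemma integral_sub_integral_sq {Ω : Type*} [MeasurableSpace Ω] {μ : Measure Ω}
    [IsProbabilityMeasure μ] {X : Ω → ℝ} (hX : MemLp X 2 μ) :
    ∫ ω, (X ω - ∫ ω', X ω' ∂μ) ^ 2 ∂μ = ∫ ω, X ω ^ 2 ∂μ - (∫ ω, X ω ∂μ) ^ 2 := by
  rw [← variance_eq_integral hX.aemeasurable, variance_eq_sub hX]
  rfl

theorem sum_integral_sq_orderStat_sub_biasM {n : ℕ} {μ : Measure (Fin n → ℝ)}
    [IsProbabilityMeasure μ] (hμ : MemLp id 2 μ) (a : ℝ) :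
    ∑ k, ∫ v, ((orderStat v k - biasM μ (fun _ => a) k) - a) ^ 2 ∂μ =
      ∑ k, ∫ v, (v k - a) ^ 2 ∂μ - ∑ k, (biasM μ (fun _ => a) k) ^ 2 := by
  have hX (k : Fin n) : MemLp (fun v => orderStat v k - a) 2 μ :=
    (memLp_orderStat hμ k).sub (memLp_const a)
  have hY (k : Fin n) : MemLp (fun v : Fin n → ℝ => v k - a) 2 μ :=
    (memLp_pi_iff.1 hμ k).sub (memLp_const a)
  have hbias (k : Fin n) : biasM μ (fun _ => a) k = ∫ v, (orderStat v k - a) ∂μ := rfl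
  calc ∑ k, ∫ v, ((orderStat v k - biasM μ (fun _ => a) k) - a) ^ 2 ∂μ
      = ∑ k, (∫ v, (orderStat v k - a) ^ 2 ∂μ - (biasM μ (fun _ => a) k) ^ 2) := by
        refine Finset.sum_congr rfl fun k _ => ?_
        rw [hbias, ← integral_sub_integral_sq (hX k)]
        congr 1 with v
        ring
    _ = ∫ v, ∑ k, (orderStat v k - a) ^ 2 ∂μ - ∑ k, (biasM μ (fun _ => a) k) ^ 2 := by
        rw [Finset.sum_sub_distrib, integral_finsetSum _ fun k _ => (hX k).integrable_sq]
    _ = ∑ k, ∫ v, (v k - a) ^ 2 ∂μ - ∑ k, (biasM μ (fun _ => a) k) ^ 2 := by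
        simp_rw [sum_comp_orderStat fun x => (x - a) ^ 2]
        rw [integral_finsetSum _ fun k _ => (hY k).integrable_sq]

lemma map_ofLp_stdGaussian (n : ℕ) :
    (stdGaussian (EuclideanSpace ℝ (Fin n))).map ofLp = stdGaussianPi n := by
  rw [← map_pi_eq_stdGaussian, Measure.map_map (by fun_prop) (by fun_prop)]
  exact Measure.map_id

instance (n : ℕ) : IsGaussian (stdGaussianPi n) := by
  rw [← map_ofLp_stdGaussian]
  exact isGaussian_map_equiv (EuclideanSpace.equiv (Fin n) ℝ)

lemma map_stdGaussian_const_add_toEuclideanCLM {ι : Type*} [Fintype ι] [DecidableEq ι]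
    (m : EuclideanSpace ℝ ι) (L : Matrix ι ι ℝ) :
    (stdGaussian (EuclideanSpace ℝ ι)).map (fun x => m + toEuclideanCLM (𝕜 := ℝ) L x) =
      multivariateGaussian m (L * Lᵀ) := by
  let T := toEuclideanCLM (𝕜 := ℝ) L
  have hS : (L * Lᵀ).PosSemidef := by simpa using posSemidef_self_mul_conjTranspose L
  rw [show (fun x => m + T x) = (fun x => m + x) ∘ T from rfl,
    ← Measure.map_map (measurable_const_add m) (by fun_prop)]
  refine IsGaussian.ext ?_ ?_
  · rw [integral_id_multivariateGaussian', integral_map (by fun_prop) (by fun_prop)]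
    simp only [id_eq]
    rw [integral_add (integrable_const m) IsGaussian.integrable_fun_id, integral_const,
      ContinuousLinearMap.integral_id_map IsGaussian.integrable_id]
    simp
  · ext x y
    rw [covarianceBilin_map_const_add, covarianceBilin_map IsGaussian.memLp_two_id,
      covarianceBilin_stdGaussian, covarianceBilin_multivariateGaussian hS, innerSL_apply_apply,
      ContinuousLinearMap.adjoint_inner_left, ← ContinuousLinearMap.comp_apply,
      ← ContinuousLinearMap.star_eq_adjoint, ← map_star, ← ContinuousLinearMap.mul_def, ← map_mul,
      inner_toEuclideanCLM, star_eq_conjTranspose, conjTranspose_eq_transpose_of_trivial]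

lemma integral_sub_sq_gaussianReal (m : ℝ) (v : NNReal) :
    ∫ x, (x - m) ^ 2 ∂gaussianReal m v = v := by
  simpa [integral_id_gaussianReal] using
    (variance_eq_integral (X := id) (μ := gaussianReal m v) aemeasurable_id).symm

namespace IsMvGaussian

variable {n : ℕ} {μ ν : Measure (Fin n → ℝ)} {δ : Fin n → ℝ} {S : Matrix (Fin n) (Fin n) ℝ}

lemma eq_map_ofLp (h : IsMvGaussian μ δ S) :
    μ = (multivariateGaussian (toLp 2 δ) S).map ofLp := by
  obtain ⟨L, rfl, rfl⟩ := h
  rw [← map_stdGaussian_const_add_toEuclideanCLM, Measure.map_map (by fun_prop) (by fun_prop),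
    ← map_ofLp_stdGaussian, Measure.map_map (by fun_prop) (by fun_prop)]
  rfl

lemma unique_s3 (hμ : IsMvGaussian μ δ S) (hν : IsMvGaussian ν δ S) : μ = ν :=
  hμ.eq_map_ofLp.trans hν.eq_map_ofLp.symm

lemma isGaussian (h : IsMvGaussian μ δ S) : IsGaussian μ := by
  rw [h.eq_map_ofLp]
  exact isGaussian_map_equiv (EuclideanSpace.equiv (Fin n) ℝ)

lemma posSemidef (h : IsMvGaussian μ δ S) : S.PosSemidef := by
  obtain ⟨L, rfl, -⟩ := h
  simpa using posSemidef_self_mul_conjTranspose L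

lemma integral_sq_sub (h : IsMvGaussian μ δ S) (k : Fin n) :
    ∫ v, (v k - δ k) ^ 2 ∂μ = S k k := by
  have hlaw := measurePreserving_eval_multivariateGaussian (μ := toLp 2 δ) h.posSemidef (i := k)
  rw [ofLp_toLp] at hlaw
  calc ∫ v, (v k - δ k) ^ 2 ∂μ
      = ∫ x, (x - δ k) ^ 2 ∂(multivariateGaussian (toLp 2 δ) S).map (fun x => x k) := by
        rw [h.eq_map_ofLp,
          integral_map (by fun_prop) (Measurable.aestronglyMeasurable (by fun_prop)),
          integral_map (by fun_prop) (Measurable.aestronglyMeasurable (by fun_prop))]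
    _ = S k k := by
        rw [hlaw.map_eq, integral_sub_sq_gaussianReal, Real.coe_toNNReal _ h.posSemidef.diag_nonneg]

end IsMvGaussian

/-- The symmetric square root `√(1-ρ) • 1 + c • 𝟙𝟙ᵀ` of `equicor n ρ`: `c` is chosen so that
`√(1-ρ) + n c = √(1 + (n-1)ρ)`, the square root of the eigenvalue of `equicor n ρ` on `𝟙`. -/
def equicorSqrt (n : ℕ) (ρ : ℝ) : Matrix (Fin n) (Fin n) ℝ :=
  √(1 - ρ) • 1 + ((√(1 + (n - 1) * ρ) - √(1 - ρ)) / n) • of fun _ _ => 1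

lemma allOnes_mul_allOnes (n : ℕ) :
    (of fun _ _ => 1 : Matrix (Fin n) (Fin n) ℝ) * of (fun _ _ => 1) =
      (n : ℝ) • of fun _ _ => 1 := by
  ext i j
  simp [mul_apply]

lemma equicor_eq_smul_add_smul (n : ℕ) (ρ : ℝ) :
    equicor n ρ = (1 - ρ) • 1 + ρ • of fun _ _ => 1 := by
  ext i j
  by_cases h : i = j <;> simp [equicor, one_apply, h]

lemma equicor_zero (n : ℕ) : equicor n 0 = 1 := by
  ext i j
  simp [equicor, one_apply]

lemma equicorSqrt_mul_transpose {n : ℕ} {ρ : ℝ} (hρ : ρ ≤ 1) (hρ' : 0 ≤ 1 + (n - 1) * ρ) :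
    equicorSqrt n ρ * (equicorSqrt n ρ)ᵀ = equicor n ρ := by
  rcases Nat.eq_zero_or_pos n with rfl | hn
  · exact Subsingleton.elim _ _
  have hJ : (of fun _ _ => 1 : Matrix (Fin n) (Fin n) ℝ)ᵀ = of fun _ _ => 1 := by ext; rfl
  simp only [equicor_eq_smul_add_smul, equicorSqrt, transpose_add, transpose_smul, transpose_one,
    hJ, add_mul, mul_add, smul_mul_smul_comm, allOnes_mul_allOnes, one_mul, mul_one]
  set s := √(1 - ρ)
  set t := √(1 + (n - 1) * ρ)
  set c := (t - s) / n
  have hs : s ^ 2 = 1 - ρ := Real.sq_sqrt (by linarith)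
  have hc : 2 * s * c + n * c ^ 2 = ρ := by
    have ht : t ^ 2 = 1 + (n - 1) * ρ := Real.sq_sqrt hρ'
    have hn' : (n : ℝ) ≠ 0 := by positivity
    simp only [c]
    field_simp
    linear_combination ht - hs
  linear_combination (norm := module) hs • (1 : Matrix (Fin n) (Fin n) ℝ) +
    hc • (of fun _ _ => 1 : Matrix (Fin n) (Fin n) ℝ)

lemma integral_eval_stdGaussianPi {n : ℕ} (i : Fin n) : ∫ w, w i ∂stdGaussianPi n = 0 := by
  rw [stdGaussianPi, integral_eval, integral_id_gaussianReal]

lemma integrable_eval_stdGaussianPi {n : ℕ} (i : Fin n) :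
    Integrable (fun w => w i) (stdGaussianPi n) :=
  integrable_eval IsGaussian.integrable_id

theorem IsMvGaussian.biasM_equicor {n : ℕ} {μ : Measure (Fin n → ℝ)} {a ρ : ℝ}
    (h : IsMvGaussian μ (fun _ => a) (equicor n ρ)) (hρ : ρ ≤ 1) (hρ' : 0 ≤ 1 + (n - 1) * ρ)
    (k : Fin n) :
    biasM μ (fun _ => a) k = √(1 - ρ) * ∫ w, orderStat w k ∂stdGaussianPi n := by
  set s := √(1 - ρ)
  set c := (√(1 + (n - 1) * ρ) - s) / n
  have hμ : μ = (stdGaussianPi n).map fun w j => s * w j + (a + c * ∑ i, w i) := by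
    refine h.unique_s3 ⟨equicorSqrt n ρ, equicorSqrt_mul_transpose hρ hρ', ?_⟩
    congr with w j
    simp [equicorSqrt, one_apply, add_mul, Finset.sum_add_distrib, Finset.mul_sum]
    ring
  have hsort (w : Fin n → ℝ) : orderStat (fun j => s * w j + (a + c * ∑ i, w i)) k =
      s * orderStat w k + (a + c * ∑ i, w i) :=
    orderStat_comp_of_monotone (g := fun x => s * x + (a + c * ∑ i, w i))
      ((monotone_id.const_mul (Real.sqrt_nonneg _)).add_const _) w k
  have hsum : Integrable (fun w : Fin n → ℝ => ∑ i, w i) (stdGaussianPi n) :=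
    integrable_finsetSum _ fun i _ => integrable_eval_stdGaussianPi i
  rw [biasM, hμ, integral_map (by fun_prop) (Measurable.aestronglyMeasurable (by fun_prop))]
  calc ∫ w, (orderStat (fun j => s * w j + (a + c * ∑ i, w i)) k - a) ∂stdGaussianPi n
      = ∫ w, (s * orderStat w k + c * ∑ i, w i) ∂stdGaussianPi n := by
        congr with w
        rw [hsort]
        ring
    _ = s * ∫ w, orderStat w k ∂stdGaussianPi n := by
        have hsorted :=
          (memLp_orderStat (μ := stdGaussianPi n) IsGaussian.memLp_two_id k).integrable one_le_two
        rw [integral_add (hsorted.const_mul s) (hsum.const_mul c),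
          integral_const_mul, integral_const_mul, integral_finsetSum _ fun i _ =>
            integrable_eval_stdGaussianPi i]
        simp [integral_eval_stdGaussianPi]

/-- Oracle MSE under equicorrelation: it equals the MSE of the unadjusted estimates (which is `p`)
minus `(1-ρ)` times the sum of squared independence biases; an affine nondecreasing function
of `ρ`. -/
theorem stmt3 {p : ℕ} (hp : 2 ≤ p) (ρ a : ℝ)
    (hρ1 : -(1 / ((p : ℝ) - 1)) < ρ) (hρ2 : ρ < 1)
    (μ ν : Measure (Fin p → ℝ))
    (hμ : IsMvGaussian μ (fun _ => a) (equicor p ρ))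
    (hν : IsMvGaussian ν (fun _ => a) (1 : Matrix (Fin p) (Fin p) ℝ)) :
    (∑ k, ∫ v, (v k - a) ^ 2 ∂μ = (p : ℝ)) ∧
      ∑ k, ∫ v, ((orderStat v k - biasM μ (fun _ => a) k) - a) ^ 2 ∂μ =
        ∑ k, ∫ v, (v k - a) ^ 2 ∂μ - (1 - ρ) * ∑ k, (biasM ν (fun _ => a) k) ^ 2 := by
  have hρ' : 0 ≤ 1 + (p - 1) * ρ := by
    have hp1 : (0 : ℝ) < p - 1 := by
      have : (2 : ℝ) ≤ p := by exact_mod_cast hp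
      linarith
    have := mul_lt_mul_of_pos_left hρ1 hp1
    rw [mul_neg, mul_one_div_cancel hp1.ne'] at this
    linarith
  have hbias (k : Fin p) : biasM μ (fun _ => a) k = √(1 - ρ) * biasM ν (fun _ => a) k := by
    rw [← equicor_zero] at hν
    rw [hμ.biasM_equicor hρ2.le hρ' k, hν.biasM_equicor zero_le_one (by simp) k, sub_zero,
      Real.sqrt_one, one_mul]
  have := hμ.isGaussian
  refine ⟨by simp [hμ.integral_sq_sub, equicor], ?_⟩
  rw [sum_integral_sq_orderStat_sub_biasM IsGaussian.memLp_two_id]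
  simp_rw [hbias, mul_pow, Real.sq_sqrt (sub_nonneg.2 hρ2.le), Finset.mul_sum]
end
end
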